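/- For every n ≥ 3: ‖s_n − f_n‖₂ ≤ 2·χ^{−1}·C⁵·‖p_{n−3}‖₂. -/

import Mathlib

open Filter RealInnerProductSpace

variable {H : Type*} [NormedAddCommGroup H] [InnerProductSpace ℝ H]

/-- `Wlt P n` is the span of `P 0, …, P (n-1)`; thus `Wlt P 0 = ⊥ = W_{-1}` and
`Wlt P (n+1)` is the space `W_n = span{P_0, …, P_n}`. -/
def Wlt (P : ℕ → H) (n : ℕ) : Submodule ℝ H := Submodule.span ℝ (P '' Set.Iio n)

/-- `Wtot P` is the space `W = ⋃ₙ Wₙ` of all polynomials. -/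
def Wtot (P : ℕ → H) : Submodule ℝ H := Submodule.span ℝ (Set.range P)

/-- The Sobolev inner product `⟨f, g⟩_S = ⟨f, g⟩₂ + χ⟨Δf, Δg⟩₂`. -/
noncomputable def innerS (Δ : H →ₗ[ℝ] H) (χ : ℝ) (f g : H) : ℝ :=
  ⟪ f, g ⟫ + χ * ⟪ Δ f, Δ g ⟫

/-- The Sobolev norm `‖f‖_S = √(‖f‖₂² + χ‖Δf‖₂²)`. -/
noncomputable def normS (Δ : H →ₗ[ℝ] H) (χ : ℝ) (f : H) : ℝ :=
  Real.sqrt (‖f‖ ^ 2 + χ * ‖Δ f‖ ^ 2)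

/-!
Put `d = G p_{n-1} - s_n`, a polynomial of degree `≤ n - 1`. Because `Δ (G p_{n-1}) = p_{n-1}` is
`L²`-orthogonal to `Δ W_{n-1}`, the Sobolev products of `d` are `⟨d, w⟩_S = ⟨p_{n-1}, G w⟩₂`; these
vanish for `w ∈ W_{n-3}`, so `d = a s_{n-1} + b s_{n-2}`. Writing `s_k = G Δ s_k + const`, with
`p_{n-1}` and (for `k ≥ 1`) `s_k` both `L²`-orthogonal to the constants, gives
`|⟨p_{n-1}, G s_k⟩₂| ≤ ‖G² p_{n-1}‖ ‖Δ s_k‖` and `‖s_k‖ ≤ C ‖Δ s_k‖`, which against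
`‖s_k‖_S² ≥ χ ‖Δ s_k‖²` bounds each term by `χ⁻¹ C³ ‖p_{n-1}‖`. Finally `‖p_{n-1}‖ ≤ ‖G² p_{n-3}‖`
by the minimality of monic Legendre polynomials.
-/

section Filtration

variable (P : ℕ → H)

lemma Wlt_mono {a b : ℕ} (hab : a ≤ b) : Wlt P a ≤ Wlt P b :=
  Submodule.span_mono (Set.image_mono fun _ hx ↦ hx.trans_le hab)

lemma P_mem_Wlt {j n : ℕ} (h : j < n) : P j ∈ Wlt P n :=
  Submodule.subset_span ⟨j, h, rfl⟩

lemma Wlt_le_Wtot (n : ℕ) : Wlt P n ≤ Wtot P :=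
  Submodule.span_mono (Set.image_subset_range P _)

lemma Wlt_zero : Wlt P 0 = ⊥ := by
  simp [Wlt]

lemma exists_mem_Wlt {u : H} (hu : u ∈ Wtot P) : ∃ n, u ∈ Wlt P n := by
  have hrange : Set.range P = ⋃ n, P '' Set.Iio n := by
    ext x
    simp only [Set.mem_range, Set.mem_iUnion, Set.mem_image, Set.mem_Iio]
    exact ⟨fun ⟨j, hj⟩ ↦ ⟨j + 1, j, j.lt_succ_self, hj⟩, fun ⟨_, j, _, hj⟩ ↦ ⟨j, hj⟩⟩
  have hdir : Directed (· ≤ ·) (Wlt P) := fun a b ↦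
    ⟨a ⊔ b, Wlt_mono P le_sup_left, Wlt_mono P le_sup_right⟩
  rw [Wtot, hrange, Submodule.span_iUnion] at hu
  exact (Submodule.mem_iSup_of_directed _ hdir).1 hu

variable {P}

lemma mem_Wlt_succ_of_monic {n : ℕ} {q : H} (hq : q - P n ∈ Wlt P n) : q ∈ Wlt P (n + 1) := by
  rw [← sub_add_cancel q (P n)]
  exact add_mem (Wlt_mono P n.le_succ hq) (P_mem_Wlt P n.lt_succ_self)

lemma exists_sub_smul_mem_Wlt {n : ℕ} {q u : H} (hq : q - P n ∈ Wlt P n)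
    (hu : u ∈ Wlt P (n + 1)) : ∃ a : ℝ, u - a • q ∈ Wlt P n := by
  have hIio : Set.Iio (n + 1) = insert n (Set.Iio n) := by
    ext j
    simp only [Set.mem_Iio, Set.mem_insert_iff]
    omega
  rw [Wlt, hIio, Set.image_insert_eq, Submodule.span_insert] at hu
  obtain ⟨z, hz, w, hw, rfl⟩ := Submodule.mem_sup.1 hu
  obtain ⟨a, rfl⟩ := Submodule.mem_span_singleton.1 hz
  refine ⟨a, ?_⟩
  rw [show a • P n + w - a • q = w - a • (q - P n) by rw [smul_sub]; abel]
  exact sub_mem hw (Submodule.smul_mem _ a hq)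

lemma P_notMem_Wlt (hP : LinearIndependent ℝ P) (n : ℕ) : P n ∉ Wlt P n :=
  hP.notMem_span_image (lt_irrefl n)

lemma ne_zero_of_monic (hP : LinearIndependent ℝ P) {n : ℕ} {q : H} (hq : q - P n ∈ Wlt P n) :
    q ≠ 0 := by
  rintro rfl
  exact P_notMem_Wlt hP n (by simpa using neg_mem hq)

end Filtration

section Laplacian

variable {P : ℕ → H} {Δ : H →ₗ[ℝ] H}

lemma delta_mem_Wlt (hΔ0 : Δ (P 0) = 0) (hΔsucc : ∀ n, Δ (P (n + 1)) = P n) {n : ℕ} {u : H}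
    (hu : u ∈ Wlt P (n + 1)) : Δ u ∈ Wlt P n := by
  refine (Submodule.span_le (p := (Wlt P n).comap Δ)).2 ?_ hu
  rintro _ ⟨j, hj, rfl⟩
  cases j with
  | zero => simp [hΔ0]
  | succ j => simpa [hΔsucc] using P_mem_Wlt P (Nat.succ_lt_succ_iff.1 hj)

lemma delta_eq_zero_of_mem_Wlt_one (hΔ0 : Δ (P 0) = 0) (hΔsucc : ∀ n, Δ (P (n + 1)) = P n)
    {u : H} (hu : u ∈ Wlt P 1) : Δ u = 0 := by
  simpa [Wlt_zero] using delta_mem_Wlt hΔ0 hΔsucc hu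

lemma mem_Wlt_succ_of_delta_mem (hP : LinearIndependent ℝ P) (hΔ0 : Δ (P 0) = 0)
    (hΔsucc : ∀ n, Δ (P (n + 1)) = P n) {n : ℕ} {u : H} (hu : u ∈ Wlt P (n + 2))
    (hΔu : Δ u ∈ Wlt P n) : u ∈ Wlt P (n + 1) := by
  obtain ⟨a, hw⟩ := exists_sub_smul_mem_Wlt (q := P (n + 1)) (by simp) hu
  have haP : a • P n ∈ Wlt P n := by
    have := sub_mem hΔu (delta_mem_Wlt hΔ0 hΔsucc hw)
    rwa [map_sub, map_smul, hΔsucc, sub_sub_cancel] at this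
  rcases eq_or_ne a 0 with rfl | ha
  · simpa using hw
  · exact absurd ((Submodule.smul_mem_iff _ ha).1 haP) (P_notMem_Wlt hP n)

lemma mem_Wlt_one_of_delta_eq_zero (hP : LinearIndependent ℝ P) (hΔ0 : Δ (P 0) = 0)
    (hΔsucc : ∀ n, Δ (P (n + 1)) = P n) {u : H} (hu : u ∈ Wtot P) (hΔu : Δ u = 0) :
    u ∈ Wlt P 1 := by
  obtain ⟨n, hn⟩ := exists_mem_Wlt P hu
  induction n with
  | zero => exact Wlt_mono P (Nat.zero_le 1) hn
  | succ k ih =>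
    cases k with
    | zero => exact hn
    | succ k => exact ih (mem_Wlt_succ_of_delta_mem hP hΔ0 hΔsucc hn (by simp [hΔu]))

lemma delta_mem_Wtot (hΔ0 : Δ (P 0) = 0) (hΔsucc : ∀ n, Δ (P (n + 1)) = P n) {u : H}
    (hu : u ∈ Wtot P) : Δ u ∈ Wtot P := by
  obtain ⟨n, hn⟩ := exists_mem_Wlt P hu
  exact Wlt_le_Wtot P n (delta_mem_Wlt hΔ0 hΔsucc (Wlt_mono P n.le_succ hn))

end Laplacian

section Green

variable {P : ℕ → H} {Δ G : H →ₗ[ℝ] H}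

lemma G_mem_Wtot (hGmap : ∀ n, ∀ u ∈ Wlt P (n + 1), G u ∈ Wlt P (n + 2)) {u : H}
    (hu : u ∈ Wtot P) : G u ∈ Wtot P := by
  obtain ⟨n, hn⟩ := exists_mem_Wlt P hu
  exact Wlt_le_Wtot P _ (hGmap n u (Wlt_mono P n.le_succ hn))

lemma G_sub_P_mem_Wlt (hP : LinearIndependent ℝ P) (hΔ0 : Δ (P 0) = 0)
    (hΔsucc : ∀ n, Δ (P (n + 1)) = P n) (hGinv : ∀ u ∈ Wtot P, Δ (G u) = u)
    (hGmap : ∀ n, ∀ u ∈ Wlt P (n + 1), G u ∈ Wlt P (n + 2)) {n : ℕ} {q : H}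
    (hq : q - P n ∈ Wlt P n) : G q - P (n + 1) ∈ Wlt P (n + 1) := by
  have hqW : q ∈ Wlt P (n + 1) := mem_Wlt_succ_of_monic hq
  refine mem_Wlt_succ_of_delta_mem hP hΔ0 hΔsucc
    (sub_mem (hGmap n q hqW) (P_mem_Wlt P (by omega))) ?_
  rwa [map_sub, hGinv q (Wlt_le_Wtot P _ hqW), hΔsucc]

lemma sub_G_delta_mem_Wlt_one (hP : LinearIndependent ℝ P) (hΔ0 : Δ (P 0) = 0)
    (hΔsucc : ∀ n, Δ (P (n + 1)) = P n) (hGinv : ∀ u ∈ Wtot P, Δ (G u) = u)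
    (hGmap : ∀ n, ∀ u ∈ Wlt P (n + 1), G u ∈ Wlt P (n + 2)) {u : H} (hu : u ∈ Wtot P) :
    u - G (Δ u) ∈ Wlt P 1 := by
  have hΔu := delta_mem_Wtot hΔ0 hΔsucc hu
  refine mem_Wlt_one_of_delta_eq_zero hP hΔ0 hΔsucc (sub_mem hu (G_mem_Wtot hGmap hΔu)) ?_
  rw [map_sub, hGinv _ hΔu, sub_self]

lemma norm_G_G_le {C : ℝ} (hC : 0 ≤ C) (hGmap : ∀ n, ∀ u ∈ Wlt P (n + 1), G u ∈ Wlt P (n + 2))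
    (hGbound : ∀ u ∈ Wtot P, ‖G u‖ ≤ C * ‖u‖) {v : H} (hv : v ∈ Wtot P) :
    ‖G (G v)‖ ≤ C ^ 2 * ‖v‖ :=
  calc ‖G (G v)‖ ≤ C * ‖G v‖ := hGbound _ (G_mem_Wtot hGmap hv)
    _ ≤ C * (C * ‖v‖) := mul_le_mul_of_nonneg_left (hGbound v hv) hC
    _ = C ^ 2 * ‖v‖ := by ring

lemma norm_le_mul_norm_delta (hP : LinearIndependent ℝ P) (hΔ0 : Δ (P 0) = 0)
    (hΔsucc : ∀ n, Δ (P (n + 1)) = P n) (hGinv : ∀ u ∈ Wtot P, Δ (G u) = u)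
    (hGmap : ∀ n, ∀ u ∈ Wlt P (n + 1), G u ∈ Wlt P (n + 2)) {C : ℝ}
    (hGbound : ∀ u ∈ Wtot P, ‖G u‖ ≤ C * ‖u‖) {u : H} (hu : u ∈ Wtot P)
    (horth : ∀ w ∈ Wlt P 1, ⟪ u, w ⟫ = 0) : ‖u‖ ≤ C * ‖Δ u‖ := by
  have hΔu := delta_mem_Wtot hΔ0 hΔsucc hu
  have hsq : ‖u‖ ^ 2 ≤ ‖u‖ * (C * ‖Δ u‖) :=
    calc ‖u‖ ^ 2 = ⟪ u, G (Δ u) ⟫ + ⟪ u, u - G (Δ u) ⟫ := by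
          rw [← inner_add_right, add_sub_cancel, real_inner_self_eq_norm_sq]
      _ = ⟪ u, G (Δ u) ⟫ := by
          rw [horth _ (sub_G_delta_mem_Wlt_one hP hΔ0 hΔsucc hGinv hGmap hu), add_zero]
      _ ≤ ‖u‖ * ‖G (Δ u)‖ := real_inner_le_norm _ _
      _ ≤ ‖u‖ * (C * ‖Δ u‖) := mul_le_mul_of_nonneg_left (hGbound _ hΔu) (norm_nonneg u)
  rcases (norm_nonneg u).eq_or_lt with hu0 | hupos
  · rw [← hu0, norm_eq_zero.1 hu0.symm, map_zero, norm_zero, mul_zero]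
  · rw [pow_two] at hsq
    exact le_of_mul_le_mul_left hsq hupos

lemma abs_inner_G_le (hP : LinearIndependent ℝ P) (hΔ0 : Δ (P 0) = 0)
    (hΔsucc : ∀ n, Δ (P (n + 1)) = P n)
    (hGsym : ∀ u ∈ Wtot P, ∀ v ∈ Wtot P, ⟪ G u, v ⟫ = ⟪ u, G v ⟫)
    (hGinv : ∀ u ∈ Wtot P, Δ (G u) = u) (hGmap : ∀ n, ∀ u ∈ Wlt P (n + 1), G u ∈ Wlt P (n + 2))
    {u v : H} (hu : u ∈ Wtot P) (hv : v ∈ Wtot P) (horth : ∀ w ∈ Wlt P 2, ⟪ v, w ⟫ = 0) :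
    |⟪ v, G u ⟫| ≤ ‖G (G v)‖ * ‖Δ u‖ := by
  have hΔu := delta_mem_Wtot hΔ0 hΔsucc hu
  have hconst : ⟪ v, G (u - G (Δ u)) ⟫ = 0 :=
    horth _ (hGmap 0 _ (sub_G_delta_mem_Wlt_one hP hΔ0 hΔsucc hGinv hGmap hu))
  have hinner : ⟪ v, G u ⟫ = ⟪ G (G v), Δ u ⟫ :=
    calc ⟪ v, G u ⟫ = ⟪ v, G (G (Δ u)) ⟫ + ⟪ v, G (u - G (Δ u)) ⟫ := by
          rw [← inner_add_right, ← map_add, add_sub_cancel]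
      _ = ⟪ G v, G (Δ u) ⟫ := by
          rw [hconst, add_zero, hGsym _ hv _ (G_mem_Wtot hGmap hΔu)]
      _ = ⟪ G (G v), Δ u ⟫ := by rw [hGsym _ (G_mem_Wtot hGmap hv) _ hΔu]
  rw [hinner]
  exact abs_real_inner_le_norm _ _

end Green

section Legendre

variable {P : ℕ → H} {p : ℕ → H}

lemma norm_le_of_monic (hpmonic : ∀ n, p n - P n ∈ Wlt P n)
    (hportho : ∀ n, ∀ w ∈ Wlt P n, ⟪ p n, w ⟫ = 0) {n : ℕ} {q : H} (hq : q - P n ∈ Wlt P n) :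
    ‖p n‖ ≤ ‖q‖ := by
  have horth : ⟪ p n, q - p n ⟫ = 0 := by
    refine hportho n _ ?_
    rw [← sub_sub_sub_cancel_right q (p n) (P n)]
    exact sub_mem hq (hpmonic n)
  have hpyth := norm_add_sq_eq_norm_sq_add_norm_sq_real horth
  rw [add_sub_cancel] at hpyth
  nlinarith [norm_nonneg q, norm_nonneg (p n), mul_self_nonneg ‖q - p n‖]

lemma norm_p_add_two_le (hP : LinearIndependent ℝ P) {Δ G : H →ₗ[ℝ] H} (hΔ0 : Δ (P 0) = 0)
    (hΔsucc : ∀ n, Δ (P (n + 1)) = P n) (hGinv : ∀ u ∈ Wtot P, Δ (G u) = u)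
    (hGmap : ∀ n, ∀ u ∈ Wlt P (n + 1), G u ∈ Wlt P (n + 2)) {C : ℝ} (hC : 0 ≤ C)
    (hGbound : ∀ u ∈ Wtot P, ‖G u‖ ≤ C * ‖u‖) (hpmonic : ∀ n, p n - P n ∈ Wlt P n)
    (hportho : ∀ n, ∀ w ∈ Wlt P n, ⟪ p n, w ⟫ = 0) (n : ℕ) :
    ‖p (n + 2)‖ ≤ C ^ 2 * ‖p n‖ := by
  have hG := G_sub_P_mem_Wlt hP hΔ0 hΔsucc hGinv hGmap (hpmonic n)
  have hGG := G_sub_P_mem_Wlt hP hΔ0 hΔsucc hGinv hGmap hG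
  exact (norm_le_of_monic hpmonic hportho hGG).trans
    (norm_G_G_le hC hGmap hGbound (Wlt_le_Wtot P _ (mem_Wlt_succ_of_monic (hpmonic n))))

end Legendre

section Sobolev

variable {Δ : H →ₗ[ℝ] H} {χ : ℝ}

lemma innerS_comm (f g : H) : innerS Δ χ f g = innerS Δ χ g f := by
  simp only [innerS, real_inner_comm]

lemma innerS_self (f : H) : innerS Δ χ f f = ‖f‖ ^ 2 + χ * ‖Δ f‖ ^ 2 := by
  simp only [innerS, real_inner_self_eq_norm_sq]

lemma innerS_add_left (f g h : H) :
    innerS Δ χ (f + g) h = innerS Δ χ f h + innerS Δ χ g h := by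
  simp only [innerS, map_add, inner_add_left]; ring

lemma innerS_sub_left (f g h : H) :
    innerS Δ χ (f - g) h = innerS Δ χ f h - innerS Δ χ g h := by
  simp only [innerS, map_sub, inner_sub_left]; ring

lemma innerS_smul_left (a : ℝ) (f g : H) : innerS Δ χ (a • f) g = a * innerS Δ χ f g := by
  simp only [innerS, map_smul, real_inner_smul_left]; ring

lemma innerS_self_pos (hχ : 0 ≤ χ) {f : H} (hf : f ≠ 0) : 0 < innerS Δ χ f f := by
  rw [innerS_self]
  have := norm_pos_iff.2 hf
  positivity

variable {P s : ℕ → H}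

lemma inner_s_eq_zero_of_mem_Wlt_one (hΔ0 : Δ (P 0) = 0) (hΔsucc : ∀ n, Δ (P (n + 1)) = P n)
    (hsortho : ∀ n, ∀ w ∈ Wlt P n, innerS Δ χ (s n) w = 0) {k : ℕ} (hk : 1 ≤ k) {w : H}
    (hw : w ∈ Wlt P 1) : ⟪ s k, w ⟫ = 0 := by
  simpa [innerS, delta_eq_zero_of_mem_Wlt_one hΔ0 hΔsucc hw] using
    hsortho k w (Wlt_mono P hk hw)

lemma exists_eq_smul_s (hχ : 0 ≤ χ) (hsmonic : ∀ n, s n - P n ∈ Wlt P n)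
    (hsortho : ∀ n, ∀ w ∈ Wlt P n, innerS Δ χ (s n) w = 0) {n : ℕ} {u : H}
    (hu : u ∈ Wlt P (n + 1)) (horth : ∀ w ∈ Wlt P n, innerS Δ χ u w = 0) :
    ∃ a : ℝ, u = a • s n := by
  obtain ⟨a, hr⟩ := exists_sub_smul_mem_Wlt (hsmonic n) hu
  refine ⟨a, sub_eq_zero.1 (not_not.1 fun hne ↦ (innerS_self_pos (Δ := Δ) hχ hne).ne' ?_)⟩
  rw [innerS_sub_left, innerS_smul_left, horth _ hr, hsortho n _ hr, mul_zero, sub_zero]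

lemma exists_eq_smul_s_add_smul_s (hχ : 0 ≤ χ) (hsmonic : ∀ n, s n - P n ∈ Wlt P n)
    (hsortho : ∀ n, ∀ w ∈ Wlt P n, innerS Δ χ (s n) w = 0) {n : ℕ} {d : H}
    (hd : d ∈ Wlt P (n + 2)) (horth : ∀ w ∈ Wlt P n, innerS Δ χ d w = 0) :
    ∃ a b : ℝ, d = a • s (n + 1) + b • s n ∧
      a * innerS Δ χ (s (n + 1)) (s (n + 1)) = innerS Δ χ d (s (n + 1)) ∧
      b * innerS Δ χ (s n) (s n) = innerS Δ χ d (s n) := by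
  obtain ⟨a, hr⟩ := exists_sub_smul_mem_Wlt (hsmonic (n + 1)) hd
  obtain ⟨b, hb⟩ := exists_eq_smul_s hχ hsmonic hsortho hr fun w hw ↦ by
    rw [innerS_sub_left, innerS_smul_left, horth w hw, hsortho _ w (Wlt_mono P n.le_succ hw),
      mul_zero, sub_zero]
  have hd_eq : d = a • s (n + 1) + b • s n := by rw [← hb, add_sub_cancel]
  have hcross : innerS Δ χ (s (n + 1)) (s n) = 0 :=
    hsortho _ _ (mem_Wlt_succ_of_monic (hsmonic n))
  refine ⟨a, b, hd_eq, ?_, ?_⟩ <;>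
    simp only [hd_eq, innerS_add_left, innerS_smul_left, hcross, innerS_comm (s n) (s (n + 1))] <;>
    ring

lemma innerS_G_sub_s {G : H →ₗ[ℝ] H} (hΔ0 : Δ (P 0) = 0) (hΔsucc : ∀ n, Δ (P (n + 1)) = P n)
    (hGsym : ∀ u ∈ Wtot P, ∀ v ∈ Wtot P, ⟪ G u, v ⟫ = ⟪ u, G v ⟫)
    (hGinv : ∀ u ∈ Wtot P, Δ (G u) = u) (hsortho : ∀ n, ∀ w ∈ Wlt P n, innerS Δ χ (s n) w = 0)
    {n : ℕ} {v : H} (hv : v ∈ Wtot P) (horth : ∀ w ∈ Wlt P n, ⟪ v, w ⟫ = 0) {w : H}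
    (hw : w ∈ Wlt P (n + 1)) : innerS Δ χ (G v - s (n + 1)) w = ⟪ v, G w ⟫ := by
  rw [innerS_sub_left, hsortho _ w hw, sub_zero, innerS, hGinv v hv,
    horth _ (delta_mem_Wlt hΔ0 hΔsucc hw), mul_zero, add_zero, hGsym v hv w (Wlt_le_Wtot P _ hw)]

end Sobolev

lemma norm_smul_s_le {P s : ℕ → H} {Δ G : H →ₗ[ℝ] H} (hP : LinearIndependent ℝ P)
    (hΔ0 : Δ (P 0) = 0) (hΔsucc : ∀ n, Δ (P (n + 1)) = P n)
    (hGsym : ∀ u ∈ Wtot P, ∀ v ∈ Wtot P, ⟪ G u, v ⟫ = ⟪ u, G v ⟫)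
    (hGinv : ∀ u ∈ Wtot P, Δ (G u) = u) (hGmap : ∀ n, ∀ u ∈ Wlt P (n + 1), G u ∈ Wlt P (n + 2))
    {C : ℝ} (hC : 0 ≤ C) (hGbound : ∀ u ∈ Wtot P, ‖G u‖ ≤ C * ‖u‖) {χ : ℝ} (hχ : 0 < χ)
    (hsmonic : ∀ n, s n - P n ∈ Wlt P n)
    (hsortho : ∀ n, ∀ w ∈ Wlt P n, innerS Δ χ (s n) w = 0) {k : ℕ} (hk : 1 ≤ k) {v : H}
    (hv : v ∈ Wtot P) (horth : ∀ w ∈ Wlt P 2, ⟪ v, w ⟫ = 0) {a : ℝ}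
    (ha : a * innerS Δ χ (s k) (s k) = ⟪ v, G (s k) ⟫) :
    ‖a • s k‖ ≤ χ⁻¹ * C ^ 3 * ‖v‖ := by
  have hsk : s k ∈ Wtot P := Wlt_le_Wtot P _ (mem_Wlt_succ_of_monic (hsmonic k))
  have hQ : 0 < innerS Δ χ (s k) (s k) := innerS_self_pos hχ.le (ne_zero_of_monic hP (hsmonic k))
  have hnum : |⟪ v, G (s k) ⟫| ≤ ‖G (G v)‖ * ‖Δ (s k)‖ :=
    abs_inner_G_le hP hΔ0 hΔsucc hGsym hGinv hGmap hsk hv horth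
  have hnorm : ‖s k‖ ≤ C * ‖Δ (s k)‖ :=
    norm_le_mul_norm_delta hP hΔ0 hΔsucc hGinv hGmap hGbound hsk
      fun _ ↦ inner_s_eq_zero_of_mem_Wlt_one hΔ0 hΔsucc hsortho hk
  have hQge : χ * ‖Δ (s k)‖ ^ 2 ≤ innerS Δ χ (s k) (s k) := by
    rw [innerS_self]
    exact le_add_of_nonneg_left (sq_nonneg _)
  have hGG : ‖G (G v)‖ ≤ C ^ 2 * ‖v‖ := norm_G_G_le hC hGmap hGbound hv
  rw [norm_smul, Real.norm_eq_abs]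
  refine le_of_mul_le_mul_right ?_ hQ
  calc |a| * ‖s k‖ * innerS Δ χ (s k) (s k) = |⟪ v, G (s k) ⟫| * ‖s k‖ := by
        rw [← ha, abs_mul, abs_of_pos hQ]; ring
    _ ≤ (‖G (G v)‖ * ‖Δ (s k)‖) * (C * ‖Δ (s k)‖) :=
        mul_le_mul hnum hnorm (norm_nonneg _) (by positivity)
    _ = χ⁻¹ * C * ‖G (G v)‖ * (χ * ‖Δ (s k)‖ ^ 2) := by field_simp
    _ ≤ χ⁻¹ * C * (C ^ 2 * ‖v‖) * innerS Δ χ (s k) (s k) := by gcongr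
    _ = χ⁻¹ * C ^ 3 * ‖v‖ * innerS Δ χ (s k) (s k) := by ring

/-- For `n ≥ 3`: `‖s_n − f_n‖₂ ≤ 2χ⁻¹C⁵‖p_{n−3}‖₂` (where `f_n = Gp_{n−1}`). -/
theorem statement11
    (P : ℕ → H) (hP : LinearIndependent ℝ P)
    (Δ G : H →ₗ[ℝ] H)
    (hΔ0 : Δ (P 0) = 0) (hΔsucc : ∀ n, Δ (P (n + 1)) = P n)
    (hGsym : ∀ u ∈ Wtot P, ∀ v ∈ Wtot P, ⟪ G u, v ⟫ = ⟪ u, G v ⟫)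
    (hGinv : ∀ u ∈ Wtot P, Δ (G u) = u)
    (hGmap : ∀ n, ∀ u ∈ Wlt P (n + 1), G u ∈ Wlt P (n + 2))
    (C : ℝ) (hC : 0 < C)
    (hGbound : ∀ u ∈ Wtot P, ‖G u‖ ≤ C * ‖u‖)
    (χ : ℝ) (hχ : 0 < χ)
    (p : ℕ → H)
    (hpmonic : ∀ n, p n - P n ∈ Wlt P n)
    (hportho : ∀ n, ∀ w ∈ Wlt P n, ⟪ p n, w ⟫ = 0)
    (s : ℕ → H)
    (hsmonic : ∀ n, s n - P n ∈ Wlt P n)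
    (hsortho : ∀ n, ∀ w ∈ Wlt P n, innerS Δ χ (s n) w = 0)
    : ∀ n, 3 ≤ n →
      ‖s n - G (p (n - 1))‖ ≤ 2 * χ⁻¹ * C ^ 5 * ‖p (n - 3)‖ := by
  intro n hn
  obtain ⟨m, rfl⟩ : ∃ m, n = m + 3 := ⟨n - 3, by omega⟩
  rw [show m + 3 - 1 = m + 2 by omega, Nat.add_sub_cancel, norm_sub_rev]
  have hp : p (m + 2) ∈ Wtot P := Wlt_le_Wtot P _ (mem_Wlt_succ_of_monic (hpmonic _))
  have hd : G (p (m + 2)) - s (m + 3) ∈ Wlt P (m + 3) := by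
    rw [← sub_sub_sub_cancel_right _ _ (P (m + 3))]
    exact sub_mem (G_sub_P_mem_Wlt hP hΔ0 hΔsucc hGinv hGmap (hpmonic _)) (hsmonic _)
  have hinnerS : ∀ w ∈ Wlt P (m + 3),
      innerS Δ χ (G (p (m + 2)) - s (m + 3)) w = ⟪ p (m + 2), G w ⟫ := fun _ ↦
    innerS_G_sub_s hΔ0 hΔsucc hGsym hGinv hsortho hp (hportho _)
  obtain ⟨a, b, hab, ha, hb⟩ := exists_eq_smul_s_add_smul_s hχ.le hsmonic hsortho hd
    fun w hw ↦ (hinnerS w (Wlt_mono P (by omega) hw)).trans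
      (hportho _ _ (Wlt_mono P (by omega) (hGmap m w hw)))
  have hcoeff : ∀ k c, 1 ≤ k → k ≤ m + 2 →
      c * innerS Δ χ (s k) (s k) = innerS Δ χ (G (p (m + 2)) - s (m + 3)) (s k) →
      ‖c • s k‖ ≤ χ⁻¹ * C ^ 3 * ‖p (m + 2)‖ := fun k _ hk hkm hc ↦
    norm_smul_s_le hP hΔ0 hΔsucc hGsym hGinv hGmap hC.le hGbound hχ hsmonic hsortho hk hp
      (fun w hw ↦ hportho _ w (Wlt_mono P (by omega) hw))
      (hc.trans (hinnerS _ (Wlt_mono P (by omega) (mem_Wlt_succ_of_monic (hsmonic k)))))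
  calc ‖G (p (m + 2)) - s (m + 3)‖ ≤ ‖a • s (m + 2)‖ + ‖b • s (m + 1)‖ := hab ▸ norm_add_le _ _
    _ ≤ 2 * χ⁻¹ * C ^ 3 * ‖p (m + 2)‖ := by
        linarith [hcoeff _ a (by omega) le_rfl ha, hcoeff _ b (by omega) (by omega) hb]
    _ ≤ 2 * χ⁻¹ * C ^ 3 * (C ^ 2 * ‖p m‖) := by
        gcongr
        exact norm_p_add_two_le hP hΔ0 hΔsucc hGinv hGmap hC.le hGbound hpmonic hportho m
    _ = 2 * χ⁻¹ * C ^ 5 * ‖p m‖ := by ring
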